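/- arXiv:0802.1060 — 5 statements merged into one kernel-verified Lean document; each statement's English description precedes it below -/
import Mathlib

section
/- Let B be a commutative local ring and let M be a nonzero B-module of finite length such that no quotient module of M is decomposable. Then M is cyclic, i.e., there exists a ∈ M with M = B·a; in particular M is isomorphic to B/ann(a). -/
/-!
Nakayama's lemma reduces cyclicity of `M` to cyclicity of `M ⧸ 𝔪M` over the residue
field `k`. The `k`-subspaces of `M ⧸ 𝔪M` are among its `B`-submodules, so `M ⧸ 𝔪M` is an
indecomposable `k`-vector space; since every subspace has a complement, it has dimension at
most one.
-/

/-- A module is decomposable if it is the internal direct sum of two nonzero submodules. -/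
def IsDecomposableModule (B : Type*) (M : Type*) [CommRing B] [AddCommGroup M]
    [Module B M] : Prop :=
  ∃ N₁ N₂ : Submodule B M, N₁ ≠ ⊥ ∧ N₂ ≠ ⊥ ∧ IsCompl N₁ N₂

open IsLocalRing

theorem IsDecomposableModule.restrictScalars (R S V : Type*) [CommRing R] [CommRing S]
    [AddCommGroup V] [Module R V] [Module S V] [SMul R S] [IsScalarTower R S V]
    (h : IsDecomposableModule S V) : IsDecomposableModule R V := by
  obtain ⟨N₁, N₂, h₁, h₂, hc⟩ := h
  exact ⟨N₁.restrictScalars R, N₂.restrictScalars R,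
    by rwa [Ne, Submodule.restrictScalars_eq_bot_iff],
    by rwa [Ne, Submodule.restrictScalars_eq_bot_iff],
    (Submodule.isCompl_restrictScalars_iff R).mpr hc⟩

theorem exists_span_singleton_eq_top_of_not_isDecomposableModule {K V : Type*} [Field K]
    [AddCommGroup V] [Module K V] (h : ¬ IsDecomposableModule K V) :
    ∃ v : V, K ∙ v = ⊤ := by
  rcases subsingleton_or_nontrivial V with _ | _
  · exact ⟨0, Subsingleton.elim _ _⟩
  obtain ⟨v, hv⟩ := exists_ne (0 : V)
  obtain ⟨W, hW⟩ := Submodule.exists_isCompl (K ∙ v)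
  refine ⟨v, by_contra fun hne => h ⟨_, W, by simpa using hv, fun hW₀ => hne ?_, hW⟩⟩
  exact eq_top_of_isCompl_bot (hW₀ ▸ hW)

theorem IsLocalRing.exists_span_singleton_eq_top_of_not_isDecomposableModule_quotient
    {R M : Type*} [CommRing R] [IsLocalRing R] [AddCommGroup M] [Module R M]
    [Module.Finite R M]
    (h : ¬ IsDecomposableModule R (M ⧸ (maximalIdeal R • ⊤ : Submodule R M))) :
    ∃ a : M, R ∙ a = ⊤ := by
  let : Field (R ⧸ maximalIdeal R) := Ideal.Quotient.field _
  obtain ⟨v, hv⟩ := exists_span_singleton_eq_top_of_not_isDecomposableModule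
    (fun hd => h (hd.restrictScalars R (R ⧸ maximalIdeal R) _))
  obtain ⟨a, rfl⟩ := Submodule.Quotient.mk_surjective _ v
  refine ⟨a, map_mkQ_eq_top.mp ?_⟩
  rw [Submodule.map_span, Set.image_singleton, Submodule.mkQ_apply,
    ← Submodule.restrictScalars_span R _ (Ideal.Quotient.mk_surjective (I := maximalIdeal R)),
    hv, Submodule.restrictScalars_top]

theorem cyclic_of_no_decomposable_quotient_general
    (B M : Type*) [CommRing B] [IsLocalRing B] [AddCommGroup M] [Module B M]
    (hfl : IsFiniteLength B M)
    (hquot : ∀ K : Submodule B M, ¬ IsDecomposableModule B (M ⧸ K)) :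
    ∃ a : M, Submodule.span B {a} = ⊤ ∧
      Nonempty ((B ⧸ Ideal.torsionOf B M a) ≃ₗ[B] M) := by
  have : IsNoetherian B M := (isFiniteLength_iff_isNoetherian_isArtinian.mp hfl).1
  obtain ⟨a, ha⟩ := exists_span_singleton_eq_top_of_not_isDecomposableModule_quotient (hquot _)
  exact ⟨a, ha, ⟨(Ideal.quotTorsionOfEquivSpanSingleton B M a).trans (.ofTop _ ha)⟩⟩

/-- Let `B` be a commutative local ring and `M` a nonzero `B`-module of finite length such
that no quotient module of `M` is decomposable.  Then `M` is cyclic: there is `a : M` with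
`M = B·a`; in particular `M ≅ B ⧸ ann(a)`. -/
theorem cyclic_of_no_decomposable_quotient
    (B M : Type*) [CommRing B] [IsLocalRing B] [AddCommGroup M] [Module B M]
    [Nontrivial M] (hfl : IsFiniteLength B M)
    (hquot : ∀ K : Submodule B M, ¬ IsDecomposableModule B (M ⧸ K)) :
    ∃ a : M, Submodule.span B {a} = ⊤ ∧
      Nonempty ((B ⧸ Ideal.torsionOf B M a) ≃ₗ[B] M) :=
  cyclic_of_no_decomposable_quotient_general B M hfl hquot
end

section
/- Let k be a field, B = k[x₁, …, x_g] the polynomial ring, and m = (x₁, …, x_g). Let M be a nonzero B-module of finite length that is annihilated by some power of m and has no decomposable submodules. Then there exist positive integers e₁, …, e_g and an injective B-module homomorphism M → B/(x₁^{e₁}, …, x_g^{e_g}); in particular M is isomorphic to I/J for some ideals J = (x₁^{e₁}, …, x_g^{e_g}) ⊆ I ⊆ B. -/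
/-!
Write `B = k[x₁, …, x_g]`, `𝔪 = (x₁, …, x_g)` and let `𝔪ⁿ M = 0`. The socle `{m | 𝔪 m = 0}`
of `M` is a `k`-vector space on which `B` acts through constant coefficients, so each of its
`k`-subspaces is a `B`-submodule; as it is not decomposable, it is a line `k s`. Every nonzero
cyclic submodule of `M` meets the socle, so a `B`-linear map out of `M` is injective as soon as
it does not kill `s`.

For `J = (x₁ⁿ⁺¹, …, x_gⁿ⁺¹)` the algebra `A = B/J` is finite dimensional, and the coefficient
of `x₁ⁿ ⋯ x_gⁿ` is a functional `ℓ` on `A` making `(a, b) ↦ ℓ (a b)` nondegenerate. Pick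
`f : M → k` with `f s ≠ 0`. Since `J M = 0`, each `b ↦ f (b m)` is `b ↦ ℓ (φ m * b)` for a
unique `φ m ∈ A`; uniqueness makes `φ` `B`-linear, and `ℓ ∘ φ = f` shows `φ s ≠ 0`.
-/

open MvPolynomial

theorem Ideal.span_range_pow_le_pow_span {ι R : Type*} [CommSemiring R] (a : ι → R) (n : ℕ) :
    Ideal.span (Set.range fun i => a i ^ n) ≤ Ideal.span (Set.range a) ^ n :=
  Ideal.span_le.mpr <| Set.range_subset_iff.mpr fun i =>
    Ideal.pow_mem_pow (Ideal.subset_span (Set.mem_range_self i)) n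

section Torsion

variable {R M : Type*} [CommRing R] [AddCommGroup M] [Module R M] {s : Set R}

theorem exists_mem_span_singleton_mem_torsionBySet {n : ℕ} {x : M} (hx : x ≠ 0)
    (hann : ∀ p ∈ Ideal.span s ^ n, p • x = 0) :
    ∃ y ∈ R ∙ x, y ≠ 0 ∧ y ∈ Submodule.torsionBySet R M s := by
  induction n generalizing x with
  | zero => exact absurd (by simpa using hann 1 (by simp)) hx
  | succ n ih =>
    by_cases hxs : x ∈ Submodule.torsionBySet R M s
    · exact ⟨x, Submodule.mem_span_singleton_self x, hx, hxs⟩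
    obtain ⟨⟨a, ha⟩, hax⟩ : ∃ a : s, (a : R) • x ≠ 0 := by
      simpa [Submodule.mem_torsionBySet_iff] using hxs
    obtain ⟨y, hy, hy0, hys⟩ := ih hax fun p hp => by
      rw [smul_smul]
      exact hann _ (pow_succ (Ideal.span s) n ▸ Ideal.mul_mem_mul hp (Ideal.subset_span ha))
    exact ⟨y, Submodule.span_singleton_smul_le R a x hy, hy0, hys⟩

theorem injective_of_disjoint_ker_torsionBySet {N : Type*} [AddCommGroup N] [Module R N] {n : ℕ}
    (hM : Ideal.span s ^ n ≤ Module.annihilator R M) {φ : M →ₗ[R] N}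
    (hφ : Disjoint (LinearMap.ker φ) (Submodule.torsionBySet R M s)) :
    Function.Injective φ := by
  rw [← LinearMap.ker_eq_bot, Submodule.eq_bot_iff]
  intro x hx
  by_contra hx0
  obtain ⟨y, hyx, hy0, hys⟩ := exists_mem_span_singleton_mem_torsionBySet hx0
    fun p hp => Module.mem_annihilator.mp (hM hp) x
  have hyφ : y ∈ LinearMap.ker φ := (Submodule.span_singleton_le_iff_mem _ _).mpr hx hyx
  exact hy0 (Submodule.disjoint_def.mp hφ y hyφ hys)

end Torsion

theorem IsDecomposableModule.of_restrictScalars {S R M : Type*} [CommRing S] [CommRing R]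
    [AddCommGroup M] [Module S M] [Module R M] [SMul S R] [IsScalarTower S R M]
    (hsurj : Function.Surjective (Submodule.restrictScalars S : Submodule R M → Submodule S M))
    (h : IsDecomposableModule S M) : IsDecomposableModule R M := by
  obtain ⟨N₁, N₂, h₁, h₂, hc⟩ := h
  let e := OrderIso.ofSurjective (Submodule.restrictScalarsEmbedding S R M) hsurj
  refine ⟨e.symm N₁, e.symm N₂, ?_, ?_, e.symm.isCompl_iff.mp hc⟩ <;>
    rwa [ne_eq, ← e.symm.map_bot, e.symm.injective.eq_iff]

theorem mem_span_singleton_of_not_isDecomposableModule {k V : Type*} [Field k]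
    [AddCommGroup V] [Module k V] (hV : ¬ IsDecomposableModule k V) {x : V} (hx : x ≠ 0)
    (y : V) : y ∈ k ∙ x := by
  obtain ⟨W, hW⟩ := Submodule.exists_isCompl (k ∙ x)
  obtain rfl : W = ⊥ := by
    by_contra hW0
    exact hV ⟨k ∙ x, W, by simpa using hx, hW0, hW⟩
  rw [eq_top_of_isCompl_bot hW]
  exact Submodule.mem_top

namespace MvPolynomial

theorem sub_C_constantCoeff_mem_span_X {σ R : Type*} [CommRing R] (p : MvPolynomial σ R) :
    p - C (constantCoeff p) ∈ Ideal.span (Set.range X) := by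
  rw [← pow_one (Ideal.span _), mem_pow_idealOfVars_iff']
  intro α hα
  obtain rfl : α = 0 := by simpa [Nat.lt_one_iff, Finsupp.degree_eq_zero_iff] using hα
  simp [constantCoeff_eq]

section

variable {σ R M : Type*} [CommRing R] [AddCommGroup M] [Module (MvPolynomial σ R) M]
  [Module R M] [IsScalarTower R (MvPolynomial σ R) M]

theorem smul_eq_constantCoeff_smul {x : M}
    (hx : x ∈ Submodule.torsionBySet (MvPolynomial σ R) M (Set.range X))
    (p : MvPolynomial σ R) : p • x = constantCoeff p • x := by
  rw [Submodule.torsionBySet_eq_torsionBySet_span, Submodule.mem_torsionBySet_iff] at hx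
  have := hx ⟨_, sub_C_constantCoeff_mem_span_X p⟩
  rwa [sub_smul, sub_eq_zero, C_eq_algebraMap, algebraMap_smul] at this

theorem restrictScalars_surjective_of_isTorsionBySet_X
    (hM : Module.IsTorsionBySet (MvPolynomial σ R) M (Set.range X)) :
    Function.Surjective
      (Submodule.restrictScalars R : Submodule (MvPolynomial σ R) M → Submodule R M) := by
  rw [Module.isTorsionBySet_iff_torsionBySet_eq_top] at hM
  refine fun W => ⟨{ W with smul_mem' := fun p x hx => ?_ }, rfl⟩
  rw [smul_eq_constantCoeff_smul (hM ▸ Submodule.mem_top) p]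
  exact W.smul_mem _ hx

end

theorem mem_span_singleton_of_mem_torsionBySet_X {σ k M : Type*} [Field k] [AddCommGroup M]
    [Module (MvPolynomial σ k) M] [Module k M] [IsScalarTower k (MvPolynomial σ k) M]
    (hT : ¬ IsDecomposableModule (MvPolynomial σ k)
      (Submodule.torsionBySet (MvPolynomial σ k) M (Set.range X)))
    {s y : M} (hs : s ∈ Submodule.torsionBySet (MvPolynomial σ k) M (Set.range X))
    (hs0 : s ≠ 0) (hy : y ∈ Submodule.torsionBySet (MvPolynomial σ k) M (Set.range X)) :
    y ∈ k ∙ s := by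
  have hk := mem_span_singleton_of_not_isDecomposableModule
    (fun h => hT (h.of_restrictScalars (restrictScalars_surjective_of_isTorsionBySet_X
      (Submodule.torsionBySet_isTorsionBySet _))))
    (x := ⟨s, hs⟩) (by simpa using hs0) ⟨y, hy⟩
  obtain ⟨c, hc⟩ := Submodule.mem_span_singleton.mp hk
  exact Submodule.mem_span_singleton.mpr ⟨c, congrArg Subtype.val hc⟩

end MvPolynomial

section Frobenius

variable {k A : Type*} [Field k] [CommRing A] [Algebra k A]
  {ℓ : Module.Dual k A} (hℓ : ∀ a, (∀ b, ℓ (a * b) = 0) → a = 0)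
include hℓ

theorem eq_of_forall_apply_mul_eq {a a' : A} (h : ∀ b, ℓ (a * b) = ℓ (a' * b)) : a = a' :=
  sub_eq_zero.mp <| hℓ _ fun b => by rw [sub_mul, map_sub, h, sub_self]

theorem exists_forall_apply_mul_eq [FiniteDimensional k A] (χ : Module.Dual k A) :
    ∃ a, ∀ b, ℓ (a * b) = χ b := by
  let Θ : A →ₗ[k] Module.Dual k A := (LinearMap.mul k A).compr₂ ℓ
  have hΘ : Function.Injective Θ := fun a a' h =>
    eq_of_forall_apply_mul_eq hℓ fun b => LinearMap.congr_fun h b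
  obtain ⟨a, ha⟩ := (LinearMap.injective_iff_surjective_of_finrank_eq_finrank
    Subspace.dual_finrank_eq.symm).mp hΘ χ
  exact ⟨a, LinearMap.congr_fun ha⟩

end Frobenius

section Quotient

variable {k R : Type*} [Field k] [CommRing R] [Algebra k R] {J : Ideal R}
  [FiniteDimensional k (R ⧸ J)] {ℓ : Module.Dual k (R ⧸ J)}
  (hℓ : ∀ a, (∀ b, ℓ (a * b) = 0) → a = 0)
include hℓ

theorem exists_linearMap_quotient_forall_apply_eq {M : Type*} [AddCommGroup M] [Module R M]
    [Module k M] [IsScalarTower k R M] (hM : J ≤ Module.annihilator R M) (f : Module.Dual k M) :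
    ∃ φ : M →ₗ[R] R ⧸ J, ∀ m, ℓ (φ m) = f m := by
  have hJ (m : M) : J ≤ LinearMap.ker (LinearMap.toSpanSingleton R M m) := fun r hr =>
    Module.mem_annihilator.mp (hM hr) m
  choose φ hφ using fun m => exists_forall_apply_mul_eq hℓ
    (f ∘ₗ (J.liftQ _ (hJ m)).restrictScalars k)
  replace hφ (m : M) (r : R) : ℓ (φ m * Ideal.Quotient.mk J r) = f (r • m) := hφ m _
  refine ⟨{ toFun := φ, map_add' := fun m m' => ?_, map_smul' := fun r m => ?_ }, fun m => ?_⟩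
  · refine eq_of_forall_apply_mul_eq hℓ fun b => ?_
    obtain ⟨b, rfl⟩ := Ideal.Quotient.mk_surjective b
    rw [hφ, add_mul, map_add, hφ, hφ, smul_add, map_add]
  · refine eq_of_forall_apply_mul_eq hℓ fun b => ?_
    obtain ⟨b, rfl⟩ := Ideal.Quotient.mk_surjective b
    rw [hφ, RingHom.id_apply, Algebra.smul_def, Ideal.Quotient.algebraMap_eq,
      mul_comm (Ideal.Quotient.mk J r), mul_assoc, ← map_mul, hφ, mul_comm, mul_smul]
  · simpa using hφ m 1

end Quotient

namespace MvPolynomial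

variable {σ R k : Type*}

theorem mem_span_X_pow_iff [CommSemiring R] {e : σ → ℕ} {p : MvPolynomial σ R} :
    p ∈ Ideal.span (Set.range fun i => X i ^ e i) ↔
      ∀ α ∈ p.support, ∃ i, e i ≤ α i := by
  have : (Set.range fun i => (X i : MvPolynomial σ R) ^ e i) =
      (monomial · 1) '' Set.range fun i => Finsupp.single i (e i) := by
    rw [← Set.range_comp]
    simp only [Function.comp_def, X_pow_eq_monomial]
  simp [this, mem_ideal_span_monomial_image, Finsupp.single_le_iff]

variable (k) [Field k] [Finite σ] (e : σ → ℕ)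

instance : FiniteDimensional k
    (MvPolynomial σ k ⧸ Ideal.span (Set.range fun i => (X i : MvPolynomial σ k) ^ e i)) := by
  set J := Ideal.span (Set.range fun i => (X i : MvPolynomial σ k) ^ e i)
  have : Algebra.IsIntegral k (MvPolynomial σ k ⧸ J) := by
    constructor
    intro a
    obtain ⟨p, rfl⟩ := Ideal.Quotient.mk_surjective a
    induction p using MvPolynomial.induction_on with
    | C c => exact isIntegral_algebraMap
    | add p q hp hq => rw [map_add]; exact hp.add hq
    | mul_X p i hp =>
      refine map_mul (Ideal.Quotient.mk J) p (X i) ▸ hp.mul ⟨Polynomial.X ^ e i,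
        Polynomial.monic_X_pow _, ?_⟩
      simp [← map_pow, J]
  exact Algebra.IsIntegral.finite

theorem exists_dual_quotient_span_X_pow_nondegenerate (he : ∀ i, 0 < e i) :
    ∃ ℓ : Module.Dual k
      (MvPolynomial σ k ⧸ Ideal.span (Set.range fun i => (X i : MvPolynomial σ k) ^ e i)),
      ∀ a, (∀ b, ℓ (a * b) = 0) → a = 0 := by
  set J := Ideal.span (Set.range fun i => (X i : MvPolynomial σ k) ^ e i)
  let τ : σ →₀ ℕ := Finsupp.equivFunOnFinite.symm (e - 1)
  have hτ (α : σ →₀ ℕ) : α ≤ τ ↔ ∀ i, α i < e i := by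
    simp only [Finsupp.le_def, τ, Finsupp.coe_equivFunOnFinite_symm, Pi.sub_apply, Pi.one_apply]
    exact forall_congr' fun i => by have := he i; omega
  have hJ : J.restrictScalars k ≤ LinearMap.ker (lcoeff k τ) := fun p hp => by
    by_contra h
    obtain ⟨i, hi⟩ := mem_span_X_pow_iff.mp hp τ (mem_support_iff.mpr h)
    exact (hi.trans_lt ((hτ τ).mp le_rfl i)).false
  refine ⟨(J.restrictScalars k).liftQ _ hJ ∘ₗ
    (Submodule.Quotient.restrictScalarsEquiv k J).symm.toLinearMap, fun a ha => ?_⟩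
  obtain ⟨p, rfl⟩ := Ideal.Quotient.mk_surjective a
  rw [Ideal.Quotient.eq_zero_iff_mem]
  by_contra hp
  obtain ⟨α, hα, hατ⟩ : ∃ α ∈ p.support, α ≤ τ := by
    simpa [J, mem_span_X_pow_iff, hτ] using hp
  have := ha (Ideal.Quotient.mk J (monomial (τ - α) 1))
  rw [← map_mul] at this
  change coeff τ (p * monomial (τ - α) 1) = 0 at this
  rw [coeff_mul_monomial', if_pos tsub_le_self, tsub_tsub_cancel_of_le hατ, mul_one] at this
  exact mem_support_iff.mp hα this

end MvPolynomial

theorem embeds_in_AS_module_general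
    (k : Type*) [Field k] (g : ℕ)
    (M : Type*) [AddCommGroup M] [Module (MvPolynomial (Fin g) k) M] [Nontrivial M]
    (hann : ∃ n : ℕ, ∀ p ∈ (Ideal.span (Set.range (X : Fin g → MvPolynomial (Fin g) k))) ^ n,
      ∀ m : M, p • m = 0)
    (hsub : ∀ N : Submodule (MvPolynomial (Fin g) k) M,
      ¬ IsDecomposableModule (MvPolynomial (Fin g) k) N) :
    ∃ e : Fin g → ℕ, (∀ i, 0 < e i) ∧
      ∃ φ : M →ₗ[MvPolynomial (Fin g) k]
          (MvPolynomial (Fin g) k ⧸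
            Ideal.span (Set.range fun i : Fin g => (X i : MvPolynomial (Fin g) k) ^ e i)),
        Function.Injective φ := by
  obtain ⟨n, hn⟩ := hann
  have hM : Ideal.span (Set.range X) ^ n ≤ Module.annihilator (MvPolynomial (Fin g) k) M :=
    fun p hp => Module.mem_annihilator.mpr (hn p hp)
  have hJ : Ideal.span (Set.range fun i => (X i : MvPolynomial (Fin g) k) ^ (n + 1)) ≤
      Module.annihilator (MvPolynomial (Fin g) k) M :=
    (Ideal.span_range_pow_le_pow_span X _).trans ((Ideal.pow_le_pow_right n.le_succ).trans hM)
  let : Module k M := Module.compHom M (algebraMap k (MvPolynomial (Fin g) k))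
  have : IsScalarTower k (MvPolynomial (Fin g) k) M := .of_algebraMap_smul fun _ _ => rfl
  obtain ⟨x, hx⟩ := exists_ne (0 : M)
  obtain ⟨s, -, hs0, hsT⟩ := exists_mem_span_singleton_mem_torsionBySet hx
    fun p hp => Module.mem_annihilator.mp (hM hp) x
  obtain ⟨f, hfs⟩ := Module.Projective.exists_dual_ne_zero k hs0
  obtain ⟨ℓ, hℓ⟩ := exists_dual_quotient_span_X_pow_nondegenerate k (fun _ : Fin g => n + 1)
    fun _ => n.succ_pos
  obtain ⟨φ, hφ⟩ := exists_linearMap_quotient_forall_apply_eq hℓ hJ f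
  refine ⟨_, fun _ => n.succ_pos, φ, injective_of_disjoint_ker_torsionBySet hM ?_⟩
  refine Submodule.disjoint_def.mpr fun y hyφ hyT => ?_
  obtain ⟨c, rfl⟩ := Submodule.mem_span_singleton.mp
    (mem_span_singleton_of_mem_torsionBySet_X (hsub _) hsT hs0 hyT)
  have hcf : c * f s = 0 := by
    rw [← smul_eq_mul, ← map_smul, ← hφ, LinearMap.mem_ker.mp hyφ, map_zero]
  rw [(mul_eq_zero.mp hcf).resolve_right hfs, zero_smul]

/-- Let `k` be a field, `B = k[x₁,…,x_g]`, and `m = (x₁,…,x_g)`.  Let `M` be a nonzero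
`B`-module of finite length, annihilated by some power of `m`, with no decomposable
submodules.  Then there are positive integers `e₁,…,e_g` and an injective `B`-module
homomorphism `M → B/(x₁^{e₁},…,x_g^{e_g})`. -/
theorem embeds_in_AS_module
    (k : Type*) [Field k] (g : ℕ)
    (M : Type*) [AddCommGroup M] [Module (MvPolynomial (Fin g) k) M] [Nontrivial M]
    (hfl : IsFiniteLength (MvPolynomial (Fin g) k) M)
    (hann : ∃ n : ℕ, ∀ p ∈ (Ideal.span (Set.range (X : Fin g → MvPolynomial (Fin g) k))) ^ n,
      ∀ m : M, p • m = 0)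
    (hsub : ∀ N : Submodule (MvPolynomial (Fin g) k) M,
      ¬ IsDecomposableModule (MvPolynomial (Fin g) k) N) :
    ∃ e : Fin g → ℕ, (∀ i, 0 < e i) ∧
      ∃ φ : M →ₗ[MvPolynomial (Fin g) k]
          (MvPolynomial (Fin g) k ⧸
            Ideal.span (Set.range fun i : Fin g => (X i : MvPolynomial (Fin g) k) ^ e i)),
        Function.Injective φ :=
  embeds_in_AS_module_general k g M hann hsub
end

section
/- Let k be a field of characteristic 0, let e ≤ f be positive integers, and let R = k[x, y]/(x^e, y^f) with its standard grading. For any integer d with 0 ≤ d ≤ e − 1 and any nonzero homogeneous element v of degree d in R, one has (x + y)^{e+f−2d−2} · v ≠ 0 in R. -/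
/-!
Dehomogenize by `y ↦ 1`. With `N = e + f - 2d - 2`, the form `w = (x + y)^N v` of degree
`N + d` becomes `(X + 1)^N v(X, 1)`, and `w ∈ (x^e, y^f)` forces every monomial `x^m y^(N+d-m)`
of `w` to have `m ≥ e` or `N + d - m ≥ f`. So the dehomogenization is supported in
`[0, α) ∪ [e, e + β)` with `α = e - d - 1`, `β = f - d - 1`, and it is divisible by
`(X + 1)^(α + β)`. In characteristic `0` such a polynomial vanishes, and a homogeneous `v` is
determined by `v(X, 1)`.
-/

namespace Polynomial

variable {R : Type*} [CommRing R]

theorem coeff_C_mul_sub_X_mul_derivative (q : R[X]) (c : R) (m : ℕ) :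
    (C c * q - X * derivative q).coeff m = (c - m) * q.coeff m := by
  rcases m with _ | m
  · simp
  · rw [coeff_sub, coeff_C_mul, coeff_X_mul, coeff_derivative]
    push_cast
    ring

theorem pow_dvd_C_mul_sub_X_mul_derivative {p q : R[X]} {n : ℕ} (h : p ^ (n + 1) ∣ q) (c : R) :
    p ^ n ∣ C c * q - X * derivative q :=
  dvd_sub ((dvd_trans (pow_dvd_pow p n.le_succ) h).mul_left _)
    ((pow_sub_one_dvd_derivative_of_pow_dvd h).mul_left _)

variable [IsDomain R] [CharZero R]

theorem eq_C_mul_X_pow_of_X_mul_derivative_eq {q : R[X]} {n : ℕ}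
    (h : X * derivative q = C (n : R) * q) : q = C (q.coeff n) * X ^ n := by
  ext m
  rw [coeff_C_mul_X_pow]
  split_ifs with hmn
  · rw [hmn]
  · have hcoeff := congrArg (coeff · m) (sub_eq_zero.2 h.symm)
    simp only [coeff_C_mul_sub_X_mul_derivative, coeff_zero] at hcoeff
    exact (mul_eq_zero.1 hcoeff).resolve_left
      (sub_ne_zero.2 (Nat.cast_injective.ne (Ne.symm hmn)))

theorem eq_zero_of_pow_dvd_of_support_subset {a : R} (ha : a ≠ 0) {α β e : ℕ} {q : R[X]}
    (hsupp : q.support ⊆ Finset.range α ∪ Finset.Ico e (e + β))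
    (hdvd : (X - C a) ^ (α + β) ∣ q) : q = 0 := by
  induction β generalizing e q with
  | zero =>
    simp only [add_zero, Finset.Ico_self, Finset.union_empty] at hsupp hdvd
    refine eq_zero_of_dvd_of_degree_lt hdvd ?_
    rw [degree_pow, degree_X_sub_C, nsmul_one, degree_lt_iff_coeff_zero]
    intro m hm
    by_contra h
    have := hsupp (mem_support_iff.2 h)
    simp only [Finset.mem_range] at this
    omega
  | succ β ih =>
    -- `e q - X q'` scales the coefficient of `X^m` by `e - m`: it kills `X^e`, so the block
    -- `[e, e + β + 1)` shrinks by one at the cost of one factor `X - a`.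
    have hEuler : C (e : R) * q - X * derivative q = 0 := by
      refine ih (e := e + 1) (fun m hm => ?_) (pow_dvd_C_mul_sub_X_mul_derivative hdvd _)
      rw [mem_support_iff, coeff_C_mul_sub_X_mul_derivative] at hm
      have hme : m ≠ e := by rintro rfl; simp at hm
      have := hsupp (mem_support_iff.2 (right_ne_zero_of_mul hm))
      simp only [Finset.mem_union, Finset.mem_range, Finset.mem_Ico] at this ⊢
      omega
    have hmono := eq_C_mul_X_pow_of_X_mul_derivative_eq (sub_eq_zero.1 hEuler).symm
    have hroot : q.IsRoot a := dvd_iff_isRoot.1 (dvd_trans (dvd_pow_self _ (by omega)) hdvd)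
    rw [hmono, IsRoot, eval_mul, eval_C, eval_pow, eval_X] at hroot
    rw [hmono, (mul_eq_zero.1 hroot).resolve_right (pow_ne_zero _ ha), map_zero, zero_mul]

end Polynomial

namespace MvPolynomial

variable {R σ : Type*} [CommSemiring R]

theorem mem_span_pair_X_pow_iff {i j : σ} {e f : ℕ} {w : MvPolynomial σ R} :
    w ∈ Ideal.span {X i ^ e, X j ^ f} ↔ ∀ μ ∈ w.support, e ≤ μ i ∨ f ≤ μ j := by
  have hgen : ({X i ^ e, X j ^ f} : Set (MvPolynomial σ R)) =
      (fun s => monomial s 1) '' {Finsupp.single i e, Finsupp.single j f} := by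
    simp [Set.image_pair, X_pow_eq_monomial]
  simp [hgen, mem_ideal_span_monomial_image, Finsupp.single_le_iff]

theorem IsHomogeneous.add_eq_of_mem_support {w : MvPolynomial (Fin 2) R} {D : ℕ}
    (hw : w.IsHomogeneous D) {μ : Fin 2 →₀ ℕ} (hμ : μ ∈ w.support) : μ 0 + μ 1 = D := by
  simp [← hw (mem_support_iff.1 hμ), Finsupp.weight_apply, Finsupp.sum_fintype, Fin.sum_univ_two]

noncomputable def dehomogenize : MvPolynomial (Fin 2) R →ₐ[R] Polynomial R :=
  aeval ![Polynomial.X, 1]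

theorem coeff_dehomogenize (w : MvPolynomial (Fin 2) R) (m : ℕ) :
    (dehomogenize w).coeff m = ∑ μ ∈ w.support with μ 0 = m, w.coeff μ := by
  conv_lhs => rw [w.as_sum]
  rw [dehomogenize, map_sum, Polynomial.finsetSum_coeff, Finset.sum_filter]
  refine Finset.sum_congr rfl fun μ _ => ?_
  simp [aeval_monomial, Finsupp.prod_fintype, Polynomial.coeff_C_mul, Polynomial.coeff_X_pow,
    eq_comm]

theorem support_dehomogenize_subset (w : MvPolynomial (Fin 2) R) :
    (dehomogenize w).support ⊆ w.support.image (· 0) := by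
  intro m hm
  rw [Polynomial.mem_support_iff, coeff_dehomogenize] at hm
  obtain ⟨μ, hμ, -⟩ := Finset.exists_ne_zero_of_sum_ne_zero hm
  rw [Finset.mem_filter] at hμ
  exact Finset.mem_image.2 ⟨μ, hμ.1, hμ.2⟩

theorem IsHomogeneous.eq_zero_of_dehomogenize_eq_zero {w : MvPolynomial (Fin 2) R} {D : ℕ}
    (hw : w.IsHomogeneous D) (h : dehomogenize w = 0) : w = 0 := by
  ext μ
  by_contra hμ
  have hcoeff := congrArg (Polynomial.coeff · (μ 0)) h
  simp only [coeff_dehomogenize, Polynomial.coeff_zero] at hcoeff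
  rw [Finset.sum_eq_single_of_mem μ (by simpa using hμ)] at hcoeff
  · exact hμ hcoeff
  · intro ν hν hνμ
    rw [Finset.mem_filter] at hν
    have := hw.add_eq_of_mem_support hν.1
    have := hw.add_eq_of_mem_support (mem_support_iff.2 hμ)
    exact absurd (Finsupp.ext fun i => by fin_cases i <;> simp <;> omega) hνμ

end MvPolynomial

open MvPolynomial

/-- Let `k` be a field of characteristic `0`, `e ≤ f` positive integers, and
`R = k[x,y]/(x^e, y^f)` with its standard grading.  For `0 ≤ d ≤ e - 1` and any nonzero
homogeneous element of degree `d` of `R` (i.e. the image of a homogeneous polynomial `v` of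
degree `d` whose image in `R` is nonzero), one has `(x+y)^(e+f-2d-2) ⬝ v ≠ 0` in `R`. -/
theorem smul_pow_add_ne_zero_of_homogeneous
    (k : Type*) [Field k] [CharZero k] (e f : ℕ) (he : 0 < e) (hef : e ≤ f)
    (d : ℕ) (hd : d ≤ e - 1) (v : MvPolynomial (Fin 2) k) (hv : v.IsHomogeneous d)
    (hv0 : Ideal.Quotient.mk
        (Ideal.span {(X 0 : MvPolynomial (Fin 2) k) ^ e, (X 1 : MvPolynomial (Fin 2) k) ^ f})
        v ≠ 0) :
    Ideal.Quotient.mk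
        (Ideal.span {(X 0 : MvPolynomial (Fin 2) k) ^ e, (X 1 : MvPolynomial (Fin 2) k) ^ f})
        ((X 0 + X 1) ^ (e + f - 2 * d - 2) * v) ≠ 0 := by
  rw [Ne, Ideal.Quotient.eq_zero_iff_mem, mem_span_pair_X_pow_iff]
  intro hmem
  set N := e + f - 2 * d - 2
  have hw : ((X 0 + X 1) ^ N * v).IsHomogeneous (N + d) := by
    simpa using (((isHomogeneous_X k 0).add (isHomogeneous_X k 1)).pow N).mul hv
  have hψ : dehomogenize ((X 0 + X 1) ^ N * v) =
      (Polynomial.X - Polynomial.C (-1)) ^ N * dehomogenize v := by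
    simp [dehomogenize]
  have hsupp : (dehomogenize ((X 0 + X 1) ^ N * v)).support ⊆
      Finset.range (e - d - 1) ∪ Finset.Ico e (e + (f - d - 1)) := by
    intro m hm
    obtain ⟨μ, hμ, rfl⟩ := Finset.mem_image.1 (support_dehomogenize_subset _ hm)
    have := hw.add_eq_of_mem_support hμ
    have := hmem μ hμ
    simp only [Finset.mem_union, Finset.mem_range, Finset.mem_Ico]
    omega
  have hψw := Polynomial.eq_zero_of_pow_dvd_of_support_subset (a := -1) (by norm_num) hsupp
    (by rw [hψ, show e - d - 1 + (f - d - 1) = N by omega]; exact dvd_mul_right _ _)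
  rw [hψ] at hψw
  have hψv := (mul_eq_zero.1 hψw).resolve_left (pow_ne_zero _ (Polynomial.X_sub_C_ne_zero _))
  exact hv0 (by rw [hv.eq_zero_of_dehomogenize_eq_zero hψv, map_zero])
end

section
/- Let k be a field of characteristic 0, let e ≤ f be positive integers, and let R = k[x, y]/(x^e, y^f) with its standard grading. For any integer d with 0 ≤ d ≤ e − 1 there exists a nonzero homogeneous element w of degree d in R such that (x + y)^{e+f−2d−1} · w = 0 in R, and w is unique up to multiplication by a nonzero scalar: any two homogeneous degree-d elements killed by (x + y)^{e+f−2d−1} are proportional. -/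
/-!
Substituting `x ↦ t, y ↦ 1 - t` (`dehom`) sends `x + y` to `1` and identifies forms of degree `n`
in `k[x, y]` with polynomials of degree `≤ n` in `k[t]` (inverse `rehom`). Writing
`e = a + d + 1`, `f = b + d + 1`, a form `w` of degree `d` is killed by `(x + y)^(a + b + 1)` in
`R` exactly when its image `p` is `t^e g + (1 - t)^f h` with `deg g ≤ b`, `deg h ≤ a`.

Such pairs `(g, h)` form a space of dimension `a + b + 2` inside the polynomials of degree
`≤ a + b + d + 1`, so a dimension count produces a nonzero `p` of degree `≤ d`. For uniqueness,
`D^(d+1) (t^e g) = -D^(d+1) ((1 - t)^f h)` is divisible by `t^a (1 - t)^b` and has degree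
`≤ a + b`, hence equals `c • t^a (1 - t)^b`; in characteristic zero `c = 0` forces `p = 0`, so
`p ↦ c` is injective on the (linear) set of solutions.
-/

namespace Polynomial

variable {R : Type*}

theorem natDegree_iterate_derivative_eq [Semiring R] [IsAddTorsionFree R]
    (p : R[X]) (n : ℕ) : (derivative^[n] p).natDegree = p.natDegree - n := by
  induction n with
  | zero => simp
  | succ n ih => rw [Function.iterate_succ_apply', natDegree_derivative, ih, Nat.sub_sub]

theorem natDegree_le_of_iterate_derivative_eq_zero [Semiring R] [IsAddTorsionFree R]
    {p : R[X]} {n : ℕ} (h : derivative^[n + 1] p = 0) : p.natDegree ≤ n := by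
  rw [Function.iterate_succ_apply', derivative_eq_zero, natDegree_iterate_derivative_eq] at h
  omega

theorem mem_degreeLT_succ_iff [Semiring R] {p : R[X]} {n : ℕ} :
    p ∈ degreeLT R (n + 1) ↔ p.natDegree ≤ n := by
  rw [degreeLT_succ_eq_degreeLE, mem_degreeLE, natDegree_le_iff_degree_le]

theorem finrank_degreeLT [Semiring R] [StrongRankCondition R] (n : ℕ) :
    Module.finrank R (degreeLT R n) = n := by
  rw [Module.finrank_eq_card_basis (degreeLT.basis R n), Fintype.card_fin]

theorem natDegree_one_sub_X [Ring R] [Nontrivial R] : ((1 : R[X]) - X).natDegree = 1 := by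
  rw [← neg_sub, natDegree_neg, ← C_1, natDegree_X_sub_C]

theorem one_sub_X_ne_zero [Ring R] [Nontrivial R] : (1 : R[X]) - X ≠ 0 :=
  ne_zero_of_natDegree_gt (n := 0) (by rw [natDegree_one_sub_X]; norm_num)

theorem natDegree_one_sub_X_pow [Ring R] [NoZeroDivisors R] [Nontrivial R] (n : ℕ) :
    (((1 : R[X]) - X) ^ n).natDegree = n := by
  rw [natDegree_pow, natDegree_one_sub_X, mul_one]

theorem isCoprime_X_pow_one_sub_X_pow [CommRing R] (m n : ℕ) :
    IsCoprime ((X : R[X]) ^ m) ((1 - X) ^ n) :=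
  IsCoprime.pow ⟨1, 1, by ring⟩

theorem exists_eq_smul_of_dvd_of_natDegree_le [CommRing R] [NoZeroDivisors R] {q r : R[X]}
    (hq : q ≠ 0) (hdvd : q ∣ r) (hdeg : r.natDegree ≤ q.natDegree) : ∃ c : R, r = c • q := by
  obtain ⟨s, rfl⟩ := hdvd
  rcases eq_or_ne s 0 with rfl | hs
  · exact ⟨0, by simp⟩
  rw [natDegree_mul hq hs] at hdeg
  rw [eq_C_of_natDegree_eq_zero (by omega : s.natDegree = 0)]
  exact ⟨s.coeff 0, by rw [mul_comm, smul_eq_C_mul]⟩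

end Polynomial

theorem Submodule.inf_ne_bot_of_finrank_lt_add {K V : Type*} [DivisionRing K] [AddCommGroup V]
    [Module K V] {s t u : Submodule K V} [FiniteDimensional K s] [FiniteDimensional K t]
    [FiniteDimensional K u] (hs : s ≤ u) (ht : t ≤ u)
    (h : Module.finrank K u < Module.finrank K s + Module.finrank K t) : s ⊓ t ≠ ⊥ := by
  intro hbot
  have hsum := Submodule.finrank_sup_add_finrank_inf_eq s t
  have hle := Submodule.finrank_mono (sup_le hs ht)
  rw [hbot, finrank_bot] at hsum
  omega

open scoped Polynomial

namespace MvPolynomial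

variable {σ R : Type*} [CommSemiring R]

attribute [local instance] MvPolynomial.gradedAlgebra

theorem homogeneousComponent_mul_of_le {q r : MvPolynomial σ R} {i n : ℕ}
    (hq : q.IsHomogeneous i) (h : i ≤ n) :
    homogeneousComponent n (q * r) = q * homogeneousComponent (n - i) r := by
  have := DirectSum.coe_decompose_mul_of_left_mem_of_le (𝒜 := homogeneousSubmodule σ R) (b := r)
    ((mem_homogeneousSubmodule i q).mpr hq) h
  rwa [← decomposition.decompose'_apply, ← decomposition.decompose'_apply]

theorem homogeneousComponent_mul_of_lt {q r : MvPolynomial σ R} {i n : ℕ}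
    (hq : q.IsHomogeneous i) (h : n < i) : homogeneousComponent n (q * r) = 0 := by
  have := DirectSum.coe_decompose_mul_of_left_mem_of_not_le (𝒜 := homogeneousSubmodule σ R)
    (b := r) ((mem_homogeneousSubmodule i q).mpr hq) h.not_ge
  rwa [← decomposition.decompose'_apply]

variable {P Q S : MvPolynomial σ R} {i j n : ℕ}

theorem exists_isHomogeneous_of_mem_span_pair (hP : P.IsHomogeneous i) (hQ : Q.IsHomogeneous j)
    (hS : S.IsHomogeneous n) (hmem : S ∈ Ideal.span {P, Q}) (hi : i ≤ n) (hj : j ≤ n) :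
    ∃ A B : MvPolynomial σ R, A.IsHomogeneous (n - i) ∧ B.IsHomogeneous (n - j) ∧
      P * A + Q * B = S := by
  obtain ⟨A, B, hAB⟩ := Ideal.mem_span_pair.mp hmem
  refine ⟨homogeneousComponent (n - i) A, homogeneousComponent (n - j) B,
    homogeneousComponent_isHomogeneous _ _, homogeneousComponent_isHomogeneous _ _, ?_⟩
  rw [← homogeneousComponent_eq_self hS, ← hAB, map_add, mul_comm A, mul_comm B,
    homogeneousComponent_mul_of_le hP hi, homogeneousComponent_mul_of_le hQ hj]

theorem eq_zero_of_mem_span_pair (hP : P.IsHomogeneous i) (hQ : Q.IsHomogeneous j)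
    (hS : S.IsHomogeneous n) (hmem : S ∈ Ideal.span {P, Q}) (hi : n < i) (hj : n < j) :
    S = 0 := by
  obtain ⟨A, B, hAB⟩ := Ideal.mem_span_pair.mp hmem
  rw [← homogeneousComponent_eq_self hS, ← hAB, map_add, mul_comm A, mul_comm B,
    homogeneousComponent_mul_of_lt hP hi, homogeneousComponent_mul_of_lt hQ hj, add_zero]

theorem IsHomogeneous.natDegree_aeval_le {q : MvPolynomial σ R} {n : ℕ}
    (hq : q.IsHomogeneous n) {v : σ → R[X]} (hv : ∀ i, (v i).natDegree ≤ 1) :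
    (MvPolynomial.aeval v q).natDegree ≤ n := by
  rw [aeval_eq_eval₂Hom, coe_eval₂Hom, eval₂_eq]
  refine Polynomial.natDegree_sum_le_of_forall_le _ _ fun s hs => ?_
  rw [← Polynomial.C_eq_algebraMap]
  refine (Polynomial.natDegree_C_mul_le _ _).trans ((Polynomial.natDegree_prod_le _ _).trans ?_)
  rw [hq.degree_eq_sum_deg_support hs]
  exact Finset.sum_le_sum fun i _ =>
    (Polynomial.natDegree_pow_le_of_le _ (hv i)).trans (by rw [mul_one])

end MvPolynomial

namespace Polynomial

section KernelTriple

variable {k : Type*} [Field k] {a b d : ℕ}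

/-- `p = dehom w` for a form `w` of degree `d` with
`(x + y)^(a + b + 1) w = x^(a + d + 1) G + y^(b + d + 1) H`, where `g = dehom G`, `h = dehom H`. -/
structure IsKernelTriple (a b d : ℕ) (p g h : k[X]) : Prop where
  natDegree_le : p.natDegree ≤ d
  natDegree_left_le : g.natDegree ≤ b
  natDegree_right_le : h.natDegree ≤ a
  eq : X ^ (a + d + 1) * g + (1 - X) ^ (b + d + 1) * h = p

theorem IsKernelTriple.smul_sub_smul {p₁ g₁ h₁ p₂ g₂ h₂ : k[X]}
    (t₁ : IsKernelTriple a b d p₁ g₁ h₁) (t₂ : IsKernelTriple a b d p₂ g₂ h₂) (c₁ c₂ : k) :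
    IsKernelTriple a b d (c₁ • p₁ - c₂ • p₂) (c₁ • g₁ - c₂ • g₂) (c₁ • h₁ - c₂ • h₂) where
  natDegree_le := (natDegree_sub_le _ _).trans <| max_le
    ((natDegree_smul_le _ _).trans t₁.natDegree_le) ((natDegree_smul_le _ _).trans t₂.natDegree_le)
  natDegree_left_le := (natDegree_sub_le _ _).trans <| max_le
    ((natDegree_smul_le _ _).trans t₁.natDegree_left_le)
    ((natDegree_smul_le _ _).trans t₂.natDegree_left_le)
  natDegree_right_le := (natDegree_sub_le _ _).trans <| max_le
    ((natDegree_smul_le _ _).trans t₁.natDegree_right_le)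
    ((natDegree_smul_le _ _).trans t₂.natDegree_right_le)
  eq := by
    rw [← t₁.eq, ← t₂.eq]
    simp only [mul_sub, mul_smul_comm, smul_add]
    abel

theorem IsKernelTriple.exists_iterate_derivative_eq {p g h : k[X]}
    (t : IsKernelTriple a b d p g h) :
    ∃ c : k, derivative^[d + 1] (X ^ (a + d + 1) * g) = c • (X ^ a * (1 - X) ^ b) := by
  have hX : (X : k[X]) ^ a ∣ derivative^[d + 1] (X ^ (a + d + 1) * g) := by
    simpa using
      pow_sub_dvd_iterate_derivative_of_pow_dvd (d + 1) (dvd_mul_right (X ^ (a + d + 1)) g)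
  have hOneSubX : ((1 : k[X]) - X) ^ b ∣ derivative^[d + 1] (X ^ (a + d + 1) * g) := by
    have hp : derivative^[d + 1] p = 0 := iterate_derivative_eq_zero (by linarith [t.natDegree_le])
    rw [eq_sub_of_add_eq t.eq, iterate_derivative_sub, hp, zero_sub, dvd_neg]
    simpa using pow_sub_dvd_iterate_derivative_of_pow_dvd (d + 1)
      (dvd_mul_right ((1 - X : k[X]) ^ (b + d + 1)) h)
  have hne : (X : k[X]) ^ a * (1 - X) ^ b ≠ 0 :=
    mul_ne_zero (by simp) (pow_ne_zero _ one_sub_X_ne_zero)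
  refine exists_eq_smul_of_dvd_of_natDegree_le hne
    ((isCoprime_X_pow_one_sub_X_pow a b).mul_dvd hX hOneSubX) ?_
  have hXg := natDegree_mul_le_of_le (natDegree_X_pow_le (R := k) (a + d + 1)) t.natDegree_left_le
  calc (derivative^[d + 1] (X ^ (a + d + 1) * g)).natDegree
      ≤ (X ^ (a + d + 1) * g).natDegree - (d + 1) := natDegree_iterate_derivative _ _
    _ ≤ a + b := by omega
    _ = (X ^ a * (1 - X) ^ b : k[X]).natDegree := by
      rw [natDegree_mul (by simp) (pow_ne_zero _ one_sub_X_ne_zero), natDegree_X_pow,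
        natDegree_one_sub_X_pow]

theorem IsKernelTriple.eq_zero_of_iterate_derivative_eq_zero [CharZero k] {p g h : k[X]}
    (t : IsKernelTriple a b d p g h) (h0 : derivative^[d + 1] (X ^ (a + d + 1) * g) = 0) :
    p = 0 := by
  have hg : X ^ (a + d + 1) * g = 0 :=
    eq_zero_of_dvd_of_natDegree_lt (dvd_mul_right _ g) <| by
      rw [natDegree_X_pow]; linarith [natDegree_le_of_iterate_derivative_eq_zero h0]
  refine eq_zero_of_dvd_of_natDegree_lt (p := (1 - X) ^ (b + d + 1)) ?_ ?_
  · rw [← t.eq, hg, zero_add]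
    exact dvd_mul_right _ h
  · rw [natDegree_one_sub_X_pow]; linarith [t.natDegree_le]

theorem IsKernelTriple.exists_eq_smul_or_eq_smul [CharZero k] {p₁ g₁ h₁ p₂ g₂ h₂ : k[X]}
    (t₁ : IsKernelTriple a b d p₁ g₁ h₁) (t₂ : IsKernelTriple a b d p₂ g₂ h₂) :
    ∃ c : k, p₂ = c • p₁ ∨ p₁ = c • p₂ := by
  obtain ⟨c₁, hc₁⟩ := t₁.exists_iterate_derivative_eq
  obtain ⟨c₂, hc₂⟩ := t₂.exists_iterate_derivative_eq
  have hcomb : c₂ • p₁ - c₁ • p₂ = 0 :=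
    (t₁.smul_sub_smul t₂ c₂ c₁).eq_zero_of_iterate_derivative_eq_zero <| by
      rw [mul_sub, mul_smul_comm, mul_smul_comm, iterate_derivative_sub, iterate_derivative_smul,
        iterate_derivative_smul, hc₁, hc₂, smul_smul, smul_smul, mul_comm, sub_self]
  rcases eq_or_ne c₁ 0 with rfl | hc₁0
  · refine ⟨0, Or.inr ?_⟩
    rw [zero_smul]
    exact t₁.eq_zero_of_iterate_derivative_eq_zero (by rw [hc₁, zero_smul])
  · refine ⟨c₁⁻¹ * c₂, Or.inl ?_⟩
    rw [mul_smul, sub_eq_zero.mp hcomb, smul_smul, inv_mul_cancel₀ hc₁0, one_smul]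

end KernelTriple

section Existence

variable {k : Type*} [Field k]

noncomputable def kernelTripleMap (a b d : ℕ) :
    degreeLT k (b + 1) × degreeLT k (a + 1) →ₗ[k] k[X] :=
  (LinearMap.mulLeft k (X ^ (a + d + 1)) ∘ₗ (degreeLT k (b + 1)).subtype).coprod
    (LinearMap.mulLeft k ((1 - X) ^ (b + d + 1)) ∘ₗ (degreeLT k (a + 1)).subtype)

theorem kernelTripleMap_apply (a b d : ℕ) (gh : degreeLT k (b + 1) × degreeLT k (a + 1)) :
    kernelTripleMap a b d gh =
      X ^ (a + d + 1) * (gh.1 : k[X]) + (1 - X) ^ (b + d + 1) * (gh.2 : k[X]) :=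
  rfl

theorem kernelTripleMap_injective (a b d : ℕ) :
    Function.Injective (kernelTripleMap (k := k) a b d) := by
  refine (injective_iff_map_eq_zero _).mpr fun ⟨⟨g, hg⟩, ⟨h, hh⟩⟩ hzero => ?_
  rw [kernelTripleMap_apply, add_eq_zero_iff_eq_neg] at hzero
  have hh0 : h = 0 := by
    refine eq_zero_of_dvd_of_natDegree_lt (p := X ^ (a + d + 1)) ?_ ?_
    · refine ((isCoprime_X_pow_one_sub_X_pow _ (b + d + 1)).dvd_of_dvd_mul_left ?_)
      rw [← dvd_neg, ← hzero]
      exact dvd_mul_right _ _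
    · rw [natDegree_X_pow]; linarith [mem_degreeLT_succ_iff.mp hh]
  have hg0 : g = 0 := by simpa [hh0, X_ne_zero] using hzero
  simp [hg0, hh0]

theorem range_kernelTripleMap_le (a b d : ℕ) :
    LinearMap.range (kernelTripleMap (k := k) a b d) ≤ degreeLT k (a + b + d + 1 + 1) := by
  rintro _ ⟨⟨⟨g, hg⟩, ⟨h, hh⟩⟩, rfl⟩
  rw [mem_degreeLT_succ_iff] at hg hh ⊢
  exact natDegree_add_le_of_degree_le
    ((natDegree_mul_le_of_le (natDegree_X_pow_le _) hg).trans (by omega))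
    ((natDegree_mul_le_of_le (natDegree_one_sub_X_pow _).le hh).trans (by omega))

theorem exists_isKernelTriple (a b d : ℕ) :
    ∃ p g h : k[X], IsKernelTriple a b d p g h ∧ p ≠ 0 := by
  have hdim : Module.finrank k (degreeLT k (a + b + d + 1 + 1)) <
      Module.finrank k (LinearMap.range (kernelTripleMap (k := k) a b d)) +
        Module.finrank k (degreeLT k (d + 1)) := by
    rw [LinearMap.finrank_range_of_inj (kernelTripleMap_injective a b d), Module.finrank_prod]
    simp only [finrank_degreeLT]
    omega
  obtain ⟨p, hp, hp0⟩ := Submodule.exists_mem_ne_zero_of_ne_bot <|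
    Submodule.inf_ne_bot_of_finrank_lt_add (range_kernelTripleMap_le a b d)
      (degreeLT_mono (by omega)) hdim
  obtain ⟨⟨⟨g, hg⟩, ⟨h, hh⟩⟩, rfl⟩ := hp.1
  exact ⟨_, g, h, ⟨mem_degreeLT_succ_iff.mp hp.2, mem_degreeLT_succ_iff.mp hg,
    mem_degreeLT_succ_iff.mp hh, rfl⟩, hp0⟩

end Existence

end Polynomial

section Dehomogenization

open Polynomial MvPolynomial

variable {R : Type*} [CommRing R]

noncomputable def dehom : MvPolynomial (Fin 2) R →ₐ[R] R[X] :=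
  MvPolynomial.aeval ![Polynomial.X, 1 - Polynomial.X]

noncomputable def rehom (n : ℕ) (p : R[X]) : MvPolynomial (Fin 2) R :=
  MvPolynomial.aeval ![X 0, X 0 + X 1] (p.homogenize n)

@[simp] theorem dehom_X_zero : dehom (X 0 : MvPolynomial (Fin 2) R) = Polynomial.X := by
  simp [dehom]

@[simp] theorem dehom_X_one : dehom (X 1 : MvPolynomial (Fin 2) R) = 1 - Polynomial.X := by
  simp [dehom]

theorem isHomogeneous_rehom (n : ℕ) (p : R[X]) : (rehom n p).IsHomogeneous n := by
  have hlin : ∀ i, (![X 0, X 0 + X 1] i : MvPolynomial (Fin 2) R).IsHomogeneous 1 :=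
    Fin.forall_fin_two.mpr ⟨isHomogeneous_X R 0, (isHomogeneous_X R 0).add (isHomogeneous_X R 1)⟩
  simpa only [rehom, one_mul] using (isHomogeneous_homogenize p).aeval _ hlin

theorem dehom_rehom {n : ℕ} {p : R[X]} (hp : p.natDegree ≤ n) : dehom (rehom n p) = p := by
  have : dehom.comp (MvPolynomial.aeval ![X 0, X 0 + X 1]) =
      MvPolynomial.aeval ![Polynomial.X, (1 : R[X])] := by
    ext i; fin_cases i <;> simp
  rw [rehom, ← AlgHom.comp_apply, this, aeval_homogenize_X_one p hp]

theorem rehom_dehom {n : ℕ} {w : MvPolynomial (Fin 2) R} (hw : w.IsHomogeneous n) :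
    rehom n (dehom w) = w := by
  -- `dehom` is `y ↦ 1` after the coordinate change `y ↦ y - x`, which `homogenize` inverts.
  set shear : MvPolynomial (Fin 2) R →ₐ[R] MvPolynomial (Fin 2) R :=
    MvPolynomial.aeval ![X 0, X 1 - X 0]
  have hlin : ∀ i, (![X 0, X 1 - X 0] i : MvPolynomial (Fin 2) R).IsHomogeneous 1 :=
    Fin.forall_fin_two.mpr ⟨isHomogeneous_X R 0, (isHomogeneous_X R 1).sub (isHomogeneous_X R 0)⟩
  have hshear : (shear w).IsHomogeneous n := by simpa only [one_mul] using hw.aeval _ hlin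
  have hdehom : (MvPolynomial.aeval ![Polynomial.X, (1 : R[X])]).comp shear = dehom := by
    ext i; fin_cases i <;> simp [shear, dehom]
  have hinv : (MvPolynomial.aeval ![X 0, X 0 + X 1]).comp shear = AlgHom.id R _ := by
    ext i; fin_cases i <;> simp [shear]
  rw [rehom, homogenize_eq_of_isHomogeneous hshear (by rw [← hdehom, AlgHom.comp_apply]),
    ← AlgHom.comp_apply, hinv, AlgHom.id_apply]

theorem isHomogeneous_X_zero_add_X_one_pow (n : ℕ) :
    ((X 0 + X 1 : MvPolynomial (Fin 2) R) ^ n).IsHomogeneous n := by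
  simpa using ((isHomogeneous_X R 0).add (isHomogeneous_X R 1)).pow n

theorem eq_of_dehom_eq {n : ℕ} {v w : MvPolynomial (Fin 2) R} (hv : v.IsHomogeneous n)
    (hw : w.IsHomogeneous n) (h : dehom v = dehom w) : v = w := by
  rw [← rehom_dehom hv, h, rehom_dehom hw]

theorem natDegree_dehom_le {n : ℕ} {w : MvPolynomial (Fin 2) R} (hw : w.IsHomogeneous n) :
    (dehom w).natDegree ≤ n :=
  hw.natDegree_aeval_le fun i => by
    fin_cases i
    exacts [natDegree_X_le, (natDegree_sub_le _ _).trans (by simp [natDegree_X_le])]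

end Dehomogenization

section Transfer

open Polynomial MvPolynomial

variable {k : Type*} [Field k] {a b d : ℕ}

theorem mem_span_iff_exists_isKernelTriple {w : MvPolynomial (Fin 2) k}
    (hw : w.IsHomogeneous d) :
    (X 0 + X 1) ^ (a + b + 1) * w ∈ Ideal.span {X 0 ^ (a + d + 1), X 1 ^ (b + d + 1)} ↔
      ∃ g h, IsKernelTriple a b d (dehom w) g h := by
  have hS := (isHomogeneous_X_zero_add_X_one_pow (a + b + 1)).mul hw
  constructor
  · intro hmem
    obtain ⟨A, B, hA, hB, hAB⟩ := exists_isHomogeneous_of_mem_span_pair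
      (isHomogeneous_X_pow 0 _) (isHomogeneous_X_pow 1 _) hS hmem (by omega) (by omega)
    refine ⟨dehom A, dehom B, natDegree_dehom_le hw, ?_, ?_, ?_⟩
    · have := natDegree_dehom_le hA; omega
    · have := natDegree_dehom_le hB; omega
    · simpa using congrArg dehom hAB
  · rintro ⟨g, h, t⟩
    have hG := (isHomogeneous_X_pow 0 (a + d + 1)).mul (isHomogeneous_rehom b g)
    have hH := (isHomogeneous_X_pow 1 (b + d + 1)).mul (isHomogeneous_rehom a h)
    rw [show a + d + 1 + b = a + b + 1 + d by omega] at hG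
    rw [show b + d + 1 + a = a + b + 1 + d by omega] at hH
    rw [eq_of_dehom_eq hS (hG.add hH)
      (by simp [dehom_rehom t.natDegree_left_le, dehom_rehom t.natDegree_right_le, t.eq])]
    exact Ideal.add_mem _ (Ideal.mul_mem_right _ _ (Ideal.subset_span (by simp)))
      (Ideal.mul_mem_right _ _ (Ideal.subset_span (by simp)))

theorem exists_isHomogeneous_notMem_span_mul_mem_span :
    ∃ w : MvPolynomial (Fin 2) k, w.IsHomogeneous d ∧
      w ∉ Ideal.span {X 0 ^ (a + d + 1), X 1 ^ (b + d + 1)} ∧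
      (X 0 + X 1) ^ (a + b + 1) * w ∈ Ideal.span {X 0 ^ (a + d + 1), X 1 ^ (b + d + 1)} := by
  obtain ⟨p, g, h, t, hp0⟩ := exists_isKernelTriple (k := k) a b d
  refine ⟨rehom d p, isHomogeneous_rehom d p, fun hmem => hp0 ?_,
    (mem_span_iff_exists_isKernelTriple (isHomogeneous_rehom d p)).mpr
      ⟨g, h, by rwa [dehom_rehom t.natDegree_le]⟩⟩
  rw [← dehom_rehom t.natDegree_le, eq_zero_of_mem_span_pair (isHomogeneous_X_pow 0 _)
    (isHomogeneous_X_pow 1 _) (isHomogeneous_rehom d p) hmem (by omega) (by omega), map_zero]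

theorem exists_eq_smul_or_eq_smul_of_mem_span [CharZero k] {w₁ w₂ : MvPolynomial (Fin 2) k}
    (hw₁ : w₁.IsHomogeneous d) (hw₂ : w₂.IsHomogeneous d)
    (h₁ : (X 0 + X 1) ^ (a + b + 1) * w₁ ∈ Ideal.span {X 0 ^ (a + d + 1), X 1 ^ (b + d + 1)})
    (h₂ : (X 0 + X 1) ^ (a + b + 1) * w₂ ∈ Ideal.span {X 0 ^ (a + d + 1), X 1 ^ (b + d + 1)}) :
    ∃ c : k, w₂ = c • w₁ ∨ w₁ = c • w₂ := by
  obtain ⟨g₁, h₁, t₁⟩ := (mem_span_iff_exists_isKernelTriple hw₁).mp h₁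
  obtain ⟨g₂, h₂, t₂⟩ := (mem_span_iff_exists_isKernelTriple hw₂).mp h₂
  have hsmul {v : MvPolynomial (Fin 2) k} (hv : v.IsHomogeneous d) (c : k) :
      (c • v).IsHomogeneous d := by
    simpa [MvPolynomial.smul_eq_C_mul] using hv.C_mul c
  obtain ⟨c, hc | hc⟩ := t₁.exists_eq_smul_or_eq_smul t₂
  · exact ⟨c, Or.inl (eq_of_dehom_eq hw₂ (hsmul hw₁ c) (by rw [hc, map_smul]))⟩
  · exact ⟨c, Or.inr (eq_of_dehom_eq hw₁ (hsmul hw₂ c) (by rw [hc, map_smul]))⟩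

end Transfer

open MvPolynomial

/-- Let `k` be a field of characteristic `0`, `e ≤ f` positive integers, and
`R = k[x,y]/(x^e, y^f)` with its standard grading.  For each `0 ≤ d ≤ e - 1` there is a
nonzero homogeneous element `w` of degree `d` of `R` with `(x+y)^(e+f-2d-1) ⬝ w = 0`, and it
is unique up to a scalar: any two homogeneous degree-`d` elements killed by
`(x+y)^(e+f-2d-1)` are proportional. -/
theorem exists_unique_homogeneous_killed_by_pow
    (k : Type*) [Field k] [CharZero k] (e f : ℕ) (he : 0 < e) (hef : e ≤ f)
    (d : ℕ) (hd : d ≤ e - 1) :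
    (∃ w : MvPolynomial (Fin 2) k, w.IsHomogeneous d ∧
        Ideal.Quotient.mk
          (Ideal.span {(X 0 : MvPolynomial (Fin 2) k) ^ e, (X 1 : MvPolynomial (Fin 2) k) ^ f})
          w ≠ 0 ∧
        Ideal.Quotient.mk
          (Ideal.span {(X 0 : MvPolynomial (Fin 2) k) ^ e, (X 1 : MvPolynomial (Fin 2) k) ^ f})
          ((X 0 + X 1) ^ (e + f - 2 * d - 1) * w) = 0) ∧
      ∀ w₁ w₂ : MvPolynomial (Fin 2) k, w₁.IsHomogeneous d → w₂.IsHomogeneous d →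
        Ideal.Quotient.mk
          (Ideal.span {(X 0 : MvPolynomial (Fin 2) k) ^ e, (X 1 : MvPolynomial (Fin 2) k) ^ f})
          ((X 0 + X 1) ^ (e + f - 2 * d - 1) * w₁) = 0 →
        Ideal.Quotient.mk
          (Ideal.span {(X 0 : MvPolynomial (Fin 2) k) ^ e, (X 1 : MvPolynomial (Fin 2) k) ^ f})
          ((X 0 + X 1) ^ (e + f - 2 * d - 1) * w₂) = 0 →
        ∃ c : k,
          Ideal.Quotient.mk
              (Ideal.span
                {(X 0 : MvPolynomial (Fin 2) k) ^ e, (X 1 : MvPolynomial (Fin 2) k) ^ f}) w₂ =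
            c • Ideal.Quotient.mk
              (Ideal.span
                {(X 0 : MvPolynomial (Fin 2) k) ^ e, (X 1 : MvPolynomial (Fin 2) k) ^ f}) w₁ ∨
          Ideal.Quotient.mk
              (Ideal.span
                {(X 0 : MvPolynomial (Fin 2) k) ^ e, (X 1 : MvPolynomial (Fin 2) k) ^ f}) w₁ =
            c • Ideal.Quotient.mk
              (Ideal.span
                {(X 0 : MvPolynomial (Fin 2) k) ^ e, (X 1 : MvPolynomial (Fin 2) k) ^ f}) w₂ := by
  obtain ⟨a, rfl⟩ : ∃ a, e = a + d + 1 := ⟨e - d - 1, by omega⟩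
  obtain ⟨b, rfl⟩ : ∃ b, f = b + d + 1 := ⟨f - d - 1, by omega⟩
  rw [show a + d + 1 + (b + d + 1) - 2 * d - 1 = a + b + 1 by omega]
  simp only [ne_eq, Ideal.Quotient.eq_zero_iff_mem]
  refine ⟨exists_isHomogeneous_notMem_span_mul_mem_span, fun w₁ w₂ hw₁ hw₂ h₁ h₂ => ?_⟩
  obtain ⟨c, rfl | rfl⟩ := exists_eq_smul_or_eq_smul_of_mem_span hw₁ hw₂ h₁ h₂
  · exact ⟨c, Or.inl (map_smul (Ideal.Quotient.mkₐ k _) c w₁)⟩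
  · exact ⟨c, Or.inr (map_smul (Ideal.Quotient.mkₐ k _) c w₂)⟩
end

section
/- Let e, f, d be integers with 1 ≤ e ≤ f and 0 ≤ d ≤ e − 1. The (d+1) × (d+1) matrix over ℚ whose (i, j) entry, for 0 ≤ i, j ≤ d, is the binomial coefficient C(e+f−2d−2, e−d−1−i+j) (interpreted as 0 when the lower index is negative or exceeds e+f−2d−2) has nonzero determinant. -/
/-!
If `v` were a nonzero kernel vector of the matrix `(C(n, k - i + j))`, with `k = e - d - 1` and
`n = e + f - 2d - 2 ≥ k`, then `P = (X + 1)^n * Σ_j v_j X^(d - j)` would have degree at most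
`n + d` and vanishing coefficients at the `d + 1` consecutive indices `k, …, k + d`, hence at most
`n` nonzero coefficients. But a nonzero polynomial divisible by `(X - a)^n`, `a` a unit, has
more than `n` nonzero coefficients (in characteristic zero): divide out the power of `X`, which
is coprime to `X - a`; differentiating then loses the nonzero constant term and one factor `X - a`.
-/

open Polynomial Finset Matrix

namespace Polynomial

section Semiring

variable {R : Type*} [Semiring R]

theorem card_support_X_pow_mul (m : ℕ) (p : R[X]) : #(X ^ m * p).support = #p.support := by
  have : (X ^ m * p).support = p.support.map (addRightEmbedding m) := by
    ext i
    simp only [mem_support_iff, coeff_X_pow_mul', mem_map, addRightEmbedding_apply]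
    constructor
    · intro hi
      split_ifs at hi with him
      · exact ⟨i - m, hi, Nat.sub_add_cancel him⟩
      · exact absurd rfl hi
    · rintro ⟨j, hj, rfl⟩
      simpa using hj
  rw [this, card_map]

theorem card_support_derivative_lt {p : R[X]} (h0 : p.coeff 0 ≠ 0) :
    #(derivative p).support < #p.support := by
  have hsub : insert 0 ((derivative p).support.map (addRightEmbedding 1)) ⊆ p.support := by
    intro i hi
    simp only [mem_insert, mem_map, addRightEmbedding_apply] at hi
    rcases hi with rfl | ⟨j, hj, rfl⟩
    · exact mem_support_iff.2 h0
    · exact of_mem_support_derivative hj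
  simpa [card_insert_of_notMem] using card_le_card hsub

theorem card_support_le_of_coeff_Icc_eq_zero {p : R[X]} {n k d : ℕ} (hk : k ≤ n)
    (hdeg : p.natDegree ≤ n + d) (hgap : ∀ t ∈ Icc k (k + d), p.coeff t = 0) :
    #p.support ≤ n := by
  have hsub : p.support ⊆ range (n + d + 1) \ Icc k (k + d) := fun t ht ↦ by
    have hne := mem_support_iff.1 ht
    have := le_natDegree_of_ne_zero hne
    exact mem_sdiff.2 ⟨mem_range.2 (by omega), fun hmem ↦ hne (hgap t hmem)⟩
  refine (card_le_card hsub).trans ?_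
  rw [card_sdiff_of_subset (fun t ht ↦ by simp only [mem_Icc, mem_range] at ht ⊢; omega),
    card_range, Nat.card_Icc]
  omega

end Semiring

theorem lt_card_support_of_X_sub_C_pow_dvd {R : Type*} [CommRing R] [IsDomain R]
    [IsAddTorsionFree R] {a : R} (ha : IsUnit a) {n : ℕ} {p : R[X]} (hp : p ≠ 0)
    (hdvd : (X - C a) ^ n ∣ p) : n < #p.support := by
  induction n generalizing p with
  | zero => exact card_pos.2 (support_nonempty.2 hp)
  | succ n ih =>
    obtain ⟨m, q, rfl, hXq⟩ : ∃ m q, p = X ^ m * q ∧ ¬ X ∣ q :=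
      ⟨_, by simpa using p.exists_eq_pow_rootMultiplicity_mul_and_not_dvd hp 0⟩
    have hq : q ≠ 0 := right_ne_zero_of_mul hp
    have hcop : IsCoprime ((X - C a) ^ (n + 1)) (X ^ m) := by
      have h : IsCoprime (X - C a) (X - C 0) := isCoprime_X_sub_C_of_isUnit_sub (by rwa [sub_zero])
      rw [C_0, sub_zero] at h
      exact h.pow
    have hdvd_q := hcop.dvd_of_dvd_mul_left hdvd
    have hq' : derivative q ≠ 0 := by
      have := natDegree_le_of_dvd hdvd_q hq
      rw [natDegree_pow, natDegree_X_sub_C] at this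
      exact derivative_ne_zero.2 (by omega)
    rw [card_support_X_pow_mul]
    have hdvd_q' : (X - C a) ^ n ∣ derivative q := by
      simpa using pow_sub_one_dvd_derivative_of_pow_dvd hdvd_q
    have hq0 : q.coeff 0 ≠ 0 := by rwa [X_dvd_iff] at hXq
    exact Nat.lt_of_le_of_lt (ih hq' hdvd_q') (card_support_derivative_lt hq0)

end Polynomial

section BinomialToeplitz

variable (R : Type*) [CommRing R]

def binomialToeplitz (n k d : ℕ) : Matrix (Fin (d + 1)) (Fin (d + 1)) R :=
  Matrix.of fun i j ↦ if (i : ℕ) ≤ k + j then (n.choose (k + j - i) : R) else 0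

variable {R} {d : ℕ}

noncomputable def revPoly (v : Fin (d + 1) → R) : R[X] :=
  ∑ j, C (v j) * X ^ (d - j)

theorem coeff_revPoly (v : Fin (d + 1) → R) (j : Fin (d + 1)) :
    (revPoly v).coeff (d - j) = v j := by
  rw [revPoly, finsetSum_coeff, sum_eq_single j]
  · simp
  · intro i _ hij
    rw [coeff_C_mul_X_pow, if_neg (by omega)]
  · simp

theorem natDegree_revPoly_le (v : Fin (d + 1) → R) : (revPoly v).natDegree ≤ d :=
  natDegree_sum_le_of_forall_le _ _ fun j _ ↦ (natDegree_C_mul_X_pow_le _ _).trans (by omega)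

theorem revPoly_ne_zero {v : Fin (d + 1) → R} (hv : v ≠ 0) : revPoly v ≠ 0 := by
  obtain ⟨j, hj⟩ := Function.ne_iff.1 hv
  intro h
  exact hj (by rw [← coeff_revPoly v j, h, coeff_zero, Pi.zero_apply])

theorem binomialToeplitz_mulVec_apply (n k : ℕ) (v : Fin (d + 1) → R) (i : Fin (d + 1)) :
    (binomialToeplitz R n k d *ᵥ v) i = ((X + 1) ^ n * revPoly v).coeff (k + d - i) := by
  simp only [mulVec, dotProduct, binomialToeplitz, of_apply, revPoly, mul_sum, finsetSum_coeff]
  refine sum_congr rfl fun j _ ↦ ?_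
  have := i.isLt
  have := j.isLt
  rw [mul_left_comm, coeff_C_mul, coeff_mul_X_pow', mul_comm]
  congr 1
  split_ifs <;> first
    | omega
    | rfl
    | rw [coeff_X_add_one_pow, show k + d - i - (d - j) = k + j - i by omega]

theorem det_binomialToeplitz_ne_zero [IsDomain R] [IsAddTorsionFree R] {n k : ℕ} (hk : k ≤ n) :
    (binomialToeplitz R n k d).det ≠ 0 := by
  intro hdet
  obtain ⟨v, hv, hMv⟩ := exists_mulVec_eq_zero_iff.2 hdet
  set P := (X + 1) ^ n * revPoly v
  have hP : P ≠ 0 := mul_ne_zero (pow_ne_zero _ (X_add_C_ne_zero 1)) (revPoly_ne_zero hv)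
  have hdeg : P.natDegree ≤ n + d := by
    refine natDegree_mul_le.trans (add_le_add ?_ (natDegree_revPoly_le v))
    compute_degree
  have hgap : ∀ t ∈ Icc k (k + d), P.coeff t = 0 := fun t ht ↦ by
    rw [mem_Icc] at ht
    have h := binomialToeplitz_mulVec_apply n k v ⟨k + d - t, by omega⟩
    rwa [hMv, Pi.zero_apply, Fin.val_mk, Nat.sub_sub_self ht.2, eq_comm] at h
  have hdvd : (X - C (-1)) ^ n ∣ P := by
    rw [map_neg, C_1, sub_neg_eq_add]
    exact dvd_mul_right _ _
  exact (lt_card_support_of_X_sub_C_pow_dvd isUnit_one.neg hP hdvd).not_ge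
    (card_support_le_of_coeff_Icc_eq_zero hk hdeg hgap)

end BinomialToeplitz

/-- Let `1 ≤ e ≤ f` and `0 ≤ d ≤ e - 1`.  The `(d+1) × (d+1)` matrix over `ℚ` whose
`(i, j)` entry is the binomial coefficient `C(e+f-2d-2, e-d-1-i+j)` (interpreted as `0`
when the lower index is negative or exceeds `e+f-2d-2`) has nonzero determinant. -/
theorem binomial_matrix_det_ne_zero (e f d : ℕ) (he : 1 ≤ e) (hef : e ≤ f) (hd : d ≤ e - 1) :
    (Matrix.of fun i j : Fin (d + 1) =>
        if h : (0 : ℤ) ≤ (e : ℤ) - d - 1 - (i : ℤ) + (j : ℤ) then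
          ((e + f - 2 * d - 2).choose ((e : ℤ) - d - 1 - (i : ℤ) + (j : ℤ)).toNat : ℚ)
        else 0).det ≠ 0 := by
  convert det_binomialToeplitz_ne_zero (R := ℚ) (d := d) (k := e - d - 1)
    (n := e + f - 2 * d - 2) (by omega) using 2
  ext i j
  simp only [binomialToeplitz, of_apply]
  split_ifs <;> first | omega | rfl | congr 2; omega
end
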